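/- Under the higher order adaptive control tuner, if φ ∈ L^∞, then lim_{t→∞} e(t) = 0. -/

import Mathlib

/-!
Lyapunov argument. For `V = ⟪e, P e⟫ + γ⁻¹ (‖ϑ - θ*‖² + ‖θ - ϑ‖²)` the Lyapunov equation and the
update laws give `V' = -2‖e‖² + 4⟪e, P b⟫⟪θ - ϑ, φ⟫ - 2γ⁻¹βN‖θ - ϑ‖²`, and the normalisation `N`
makes this at most `-‖e‖²`. So `V` decreases: `e` and `θ - θ*` stay bounded and
`∫₀^∞ ‖e‖² ≤ V 0`. Boundedness of `φ` then bounds `e'`, hence the derivative of `‖e‖²`, and an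
integrable nonnegative function with bounded derivative tends to zero (Barbalat).
-/

open Matrix Filter

local notation "⟪" x ", " y "⟫" => @inner ℝ _ _ x y

open Set Topology

theorem tendsto_integral_add_nhds_zero_of_integral_le {f : ℝ → ℝ} {C : ℝ} (hf : Continuous f)
    (hf0 : ∀ t, 0 ≤ f t) (hint : ∀ T, 0 ≤ T → ∫ t in (0 : ℝ)..T, f t ≤ C) (δ : ℝ) :
    Tendsto (fun t => ∫ s in t..t + δ, f s) atTop (𝓝 0) := by
  set F : ℝ → ℝ := fun T => ∫ t in (0 : ℝ)..T, f t
  have hF_sub (a b : ℝ) : F b - F a = ∫ t in a..b, f t :=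
    intervalIntegral.integral_interval_sub_left (hf.intervalIntegrable _ _)
      (hf.intervalIntegrable _ _)
  have hF_mono : Monotone F := fun a b hab =>
    sub_nonneg.1 <| (hF_sub a b).symm ▸ intervalIntegral.integral_nonneg hab fun t _ => hf0 t
  have hF_bdd : BddAbove (range F) := by
    refine ⟨C, forall_mem_range.2 fun T => ?_⟩
    rcases le_total 0 T with hT | hT
    · exact hint T hT
    · exact (hF_mono hT).trans (hint 0 le_rfl)
  have hF_lim := tendsto_atTop_ciSup hF_mono hF_bdd
  simpa only [← hF_sub, sub_self, Function.comp_def, id] using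
    (hF_lim.comp (tendsto_atTop_add_const_right _ δ tendsto_id)).sub hF_lim

theorem mul_sub_le_integral_of_abs_deriv_le {f f' : ℝ → ℝ} {K t δ : ℝ}
    (hf : ∀ s, HasDerivAt f (f' s) s) (hf' : ∀ s, 0 ≤ s → |f' s| ≤ K)
    (ht : 0 ≤ t) (hδ : 0 ≤ δ) :
    δ * (f t - K * δ) ≤ ∫ s in t..t + δ, f s := by
  have hf_cont : Continuous f := continuous_iff_continuousAt.2 fun s => (hf s).continuousAt
  have hlower : ∀ s ∈ Icc t (t + δ), f t - K * δ ≤ f s := by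
    intro s hs
    have hmvt := (convex_Ici (0 : ℝ)).norm_image_sub_le_of_norm_hasDerivWithin_le
      (fun x _ => (hf x).hasDerivWithinAt) hf' (mem_Ici.2 ht) (mem_Ici.2 (ht.trans hs.1))
    rw [Real.norm_eq_abs, Real.norm_eq_abs, abs_of_nonneg (sub_nonneg.2 hs.1)] at hmvt
    have hK : 0 ≤ K := (abs_nonneg _).trans (hf' t ht)
    nlinarith [neg_abs_le (f s - f t), hs.2]
  calc δ * (f t - K * δ) = ∫ _ in t..t + δ, (f t - K * δ) := by
        rw [intervalIntegral.integral_const, smul_eq_mul, add_sub_cancel_left]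
    _ ≤ ∫ s in t..t + δ, f s :=
      intervalIntegral.integral_mono_on (by linarith) (by simp) (hf_cont.intervalIntegrable _ _)
        hlower

theorem tendsto_zero_of_hasDerivAt_of_integral_le {f f' : ℝ → ℝ} {K C : ℝ}
    (hf : ∀ t, HasDerivAt f (f' t) t) (hf' : ∀ t, 0 ≤ t → |f' t| ≤ K)
    (hf0 : ∀ t, 0 ≤ f t) (hint : ∀ T, 0 ≤ T → ∫ t in (0 : ℝ)..T, f t ≤ C) :
    Tendsto f atTop (𝓝 0) := by
  have hf_cont : Continuous f := continuous_iff_continuousAt.2 fun t => (hf t).continuousAt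
  have hK : 0 ≤ K := (abs_nonneg _).trans (hf' 0 le_rfl)
  refine tendsto_order.2 ⟨fun a ha => Eventually.of_forall fun t => ha.trans_le (hf0 t),
    fun a ha => ?_⟩
  -- `f t ≤ (∫ s in t..t+δ, f s) / δ + K δ`, and the average tends to zero for each fixed `δ`
  set δ := a / (2 * (K + 1)) with hδ
  have hδ0 : 0 < δ := by positivity
  have hKδ : K * δ < a / 2 := by
    rw [hδ, mul_div_assoc', div_lt_div_iff₀ (by positivity) (by positivity)]
    nlinarith
  filter_upwards [(tendsto_integral_add_nhds_zero_of_integral_le hf_cont hf0 hint δ).eventually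
    (gt_mem_nhds (show 0 < δ * (a / 2) by positivity)), eventually_ge_atTop 0] with t hI ht
  have hft := mul_sub_le_integral_of_abs_deriv_le hf hf' ht hδ0.le
  nlinarith

theorem integral_le_sub_of_hasDerivAt_le_neg {V V' g : ℝ → ℝ} {a b : ℝ} (hab : a ≤ b)
    (hV : ∀ t, HasDerivAt V (V' t) t) (hg : Continuous g) (hVg : ∀ t, V' t ≤ -g t) :
    ∫ t in a..b, g t ≤ V a - V b := by
  have hV_cont : Continuous V := continuous_iff_continuousAt.2 fun t => (hV t).continuousAt
  have := intervalIntegral.integral_le_sub_of_hasDeriv_right_of_le hab hV_cont.neg.continuousOn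
    (fun t _ => (hV t).neg.hasDerivWithinAt) hg.integrableOn_Icc fun t _ => le_neg.2 (hVg t)
  simp only [Pi.neg_apply] at this
  linarith

section InnerProductSpace

variable {E : Type*} [NormedAddCommGroup E] [InnerProductSpace ℝ E]

theorem tendsto_zero_of_hasDerivAt_of_integral_norm_sq_le {e e' : ℝ → E} {B K C : ℝ}
    (he : ∀ t, HasDerivAt e (e' t) t) (hB : ∀ t, 0 ≤ t → ‖e t‖ ≤ B)
    (hK : ∀ t, 0 ≤ t → ‖e' t‖ ≤ K) (hint : ∀ T, 0 ≤ T → ∫ t in (0 : ℝ)..T, ‖e t‖ ^ 2 ≤ C) :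
    Tendsto e atTop (𝓝 0) := by
  have hsq : Tendsto (fun t => ‖e t‖ ^ 2) atTop (𝓝 0) := by
    refine tendsto_zero_of_hasDerivAt_of_integral_le (fun t => (he t).norm_sq) (K := 2 * B * K)
      (fun t ht => ?_) (fun t => sq_nonneg _) hint
    calc |2 * ⟪e t, e' t⟫| = 2 * |⟪e t, e' t⟫| := by rw [abs_mul, abs_two]
      _ ≤ 2 * (‖e t‖ * ‖e' t‖) := by gcongr; exact abs_real_inner_le_norm _ _
      _ ≤ 2 * B * K := by
        rw [mul_assoc]; gcongr
        · exact (norm_nonneg _).trans (hB t ht)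
        · exact hB t ht
        · exact hK t ht
  rw [tendsto_zero_iff_norm_tendsto_zero]
  simpa [Real.sqrt_sq (norm_nonneg _)] using hsq.sqrt

theorem LinearMap.exists_pos_mul_norm_sq_le_inner_self [FiniteDimensional ℝ E] (T : E →ₗ[ℝ] E)
    (hT : ∀ x ≠ 0, 0 < ⟪x, T x⟫) : ∃ c > 0, ∀ x, c * ‖x‖ ^ 2 ≤ ⟪x, T x⟫ := by
  rcases subsingleton_or_nontrivial E with hE | hE
  · exact ⟨1, one_pos, fun x => by simp [Subsingleton.elim x 0]⟩
  have hq : Continuous fun x => ⟪x, T x⟫ := continuous_id.inner T.continuous_of_finiteDimensional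
  obtain ⟨u, hu, hmin⟩ := (isCompact_sphere (0 : E) 1).exists_isMinOn
    (NormedSpace.sphere_nonempty.2 zero_le_one) hq.continuousOn
  have hu0 : u ≠ 0 := ne_zero_of_mem_unit_sphere ⟨u, hu⟩
  refine ⟨⟪u, T u⟫, hT u hu0, fun x => ?_⟩
  rcases eq_or_ne x 0 with rfl | hx
  · simp
  have hx' : 0 < ‖x‖ := norm_pos_iff.2 hx
  have hmem : ‖x‖⁻¹ • x ∈ Metric.sphere (0 : E) 1 := by
    simp [norm_smul, hx'.ne']
  have hux : ⟪u, T u⟫ ≤ ⟪‖x‖⁻¹ • x, T (‖x‖⁻¹ • x)⟫ := hmin hmem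
  rw [map_smul, real_inner_smul_left, real_inner_smul_right] at hux
  calc ⟪u, T u⟫ * ‖x‖ ^ 2 ≤ ‖x‖⁻¹ * (‖x‖⁻¹ * ⟪x, T x⟫) * ‖x‖ ^ 2 := by gcongr
    _ = ⟪x, T x⟫ := by field_simp

theorem HasDerivAt.inner_isSymmetric [FiniteDimensional ℝ E] {T : E →ₗ[ℝ] E}
    (hT : T.IsSymmetric) {f : ℝ → E} {f' : E} {t : ℝ} (hf : HasDerivAt f f' t) :
    HasDerivAt (fun s => ⟪f s, T (f s)⟫) (2 * ⟪f', T (f t)⟫) t := by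
  have hTf : HasDerivAt (fun s => T (f s)) (T f') t :=
    (LinearMap.toContinuousLinearMap T).hasFDerivAt.comp_hasDerivAt t hf
  refine (hf.inner ℝ hTf).congr_deriv ?_
  rw [← hT, real_inner_comm]
  ring

end InnerProductSpace

section Matrix

variable {ι : Type*} [Fintype ι] [DecidableEq ι]

theorem Matrix.inner_toEuclideanLin_transpose (M : Matrix ι ι ℝ) (x y : EuclideanSpace ℝ ι) :
    ⟪x, toEuclideanLin Mᵀ y⟫ = ⟪toEuclideanLin M x, y⟫ := by
  rw [← conjTranspose_eq_transpose_of_trivial, toEuclideanLin_conjTranspose_eq_adjoint,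
    LinearMap.adjoint_inner_right]

theorem Matrix.inner_toEuclideanLin_self_of_lyapunov {A P : Matrix ι ι ℝ} (hP : P.IsHermitian)
    (hLyap : Aᵀ * P + P * A = -((2 : ℝ) • 1)) (x : EuclideanSpace ℝ ι) :
    ⟪toEuclideanLin A x, toEuclideanLin P x⟫ = -‖x‖ ^ 2 := by
  have hAP : ⟪x, toEuclideanLin (Aᵀ * P) x⟫ = ⟪toEuclideanLin A x, toEuclideanLin P x⟫ := by
    rw [toLpLin_mul_same, LinearMap.comp_apply, inner_toEuclideanLin_transpose]
  have hPA : ⟪x, toEuclideanLin (P * A) x⟫ = ⟪toEuclideanLin A x, toEuclideanLin P x⟫ := by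
    rw [toLpLin_mul_same, LinearMap.comp_apply, ← isSymmetric_toEuclideanLin_iff.2 hP,
      real_inner_comm]
  have h : ⟪x, toEuclideanLin (Aᵀ * P + P * A) x⟫ = -2 * ‖x‖ ^ 2 := by
    simp [hLyap, inner_smul_right]
  rw [map_add, LinearMap.add_apply, inner_add_right, hAP, hPA] at h
  linarith

theorem Matrix.PosDef.inner_toEuclideanLin_pos {P : Matrix ι ι ℝ} (hP : P.PosDef)
    {x : EuclideanSpace ℝ ι} (hx : x ≠ 0) :
    0 < ⟪x, toEuclideanLin P x⟫ := by
  simpa [EuclideanSpace.inner_eq_star_dotProduct, toLpLin_apply, dotProduct_comm] using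
    hP.dotProduct_mulVec_pos (x := WithLp.ofLp x) (by simpa using hx)

end Matrix

section HigherOrderTuner

variable {ι F : Type*} [Fintype ι] [DecidableEq ι] [NormedAddCommGroup F]
  {β γ N t : ℝ} {A P : Matrix ι ι ℝ} {b : EuclideanSpace ℝ ι} {φ : ℝ → F} {θstar : F}
  {e : ℝ → EuclideanSpace ℝ ι} {θ ϑ : ℝ → F}

noncomputable def tunerLyapunov (P : Matrix ι ι ℝ) (γ : ℝ) (θstar : F)
    (e : ℝ → EuclideanSpace ℝ ι) (θ ϑ : ℝ → F) (t : ℝ) : ℝ :=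
  ⟪e t, toEuclideanLin P (e t)⟫ + γ⁻¹ * (‖ϑ t - θstar‖ ^ 2 + ‖θ t - ϑ t‖ ^ 2)

theorem tunerLyapunov_rate_le {x p s T Φ B β γ : ℝ} (hβ : 0 < β) (hγ : 0 < γ) (hp : |p| ≤ x * B)
    (hs : |s| ≤ T * Φ) :
    -2 * x ^ 2 + 4 * p * s - 2 * γ⁻¹ * β * (1 + 2 * γ * B ^ 2 / β * Φ ^ 2) * T ^ 2 ≤ -x ^ 2 := by
  have hps : p * s ≤ x * B * (T * Φ) := by
    calc p * s ≤ |p| * |s| := by rw [← abs_mul]; exact le_abs_self _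
      _ ≤ x * B * (T * Φ) := mul_le_mul hp hs (abs_nonneg _) ((abs_nonneg _).trans hp)
  have hN : γ⁻¹ * β * (1 + 2 * γ * B ^ 2 / β * Φ ^ 2) = γ⁻¹ * β + 2 * B ^ 2 * Φ ^ 2 := by
    field_simp
  have : 0 ≤ γ⁻¹ * β * T ^ 2 := by positivity
  -- the normalisation `N` is exactly what completes the square `(x - 2 B Φ T)²`
  nlinarith [sq_nonneg (x - 2 * B * Φ * T)]

theorem hasDerivAt_tunerLyapunov [InnerProductSpace ℝ F] (hP : P.IsHermitian)
    (hLyap : Aᵀ * P + P * A = -((2 : ℝ) • 1)) (hγ : γ ≠ 0)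
    (he : HasDerivAt e (toEuclideanLin A (e t) + ⟪θ t - θstar, φ t⟫ • b) t)
    (hϑ : HasDerivAt ϑ ((-γ * ⟪e t, toEuclideanLin P b⟫) • φ t) t)
    (hθ : HasDerivAt θ ((-(β * N)) • (θ t - ϑ t)) t) :
    HasDerivAt (tunerLyapunov P γ θstar e θ ϑ) (-2 * ‖e t‖ ^ 2
      + 4 * ⟪e t, toEuclideanLin P b⟫ * ⟪θ t - ϑ t, φ t⟫
      - 2 * γ⁻¹ * β * N * ‖θ t - ϑ t‖ ^ 2) t := by
  have hPsymm := isSymmetric_toEuclideanLin_iff.2 hP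
  refine ((he.inner_isSymmetric hPsymm).add
    (((hϑ.sub_const θstar).norm_sq.add (hθ.sub hϑ).norm_sq).const_mul γ⁻¹)).congr_deriv ?_
  have hb : ⟪b, toEuclideanLin P (e t)⟫ = ⟪e t, toEuclideanLin P b⟫ := by
    rw [← hPsymm, real_inner_comm]
  have hsplit : θ t - θstar = (θ t - ϑ t) + (ϑ t - θstar) := by abel
  rw [hsplit]
  simp only [Pi.sub_apply, inner_add_left, inner_sub_right, real_inner_smul_left,
    real_inner_smul_right, inner_toEuclideanLin_self_of_lyapunov hP hLyap, hb,
    ← real_inner_self_eq_norm_sq (θ t - ϑ t)]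
  field_simp
  ring

theorem exists_hasDerivAt_tunerLyapunov_le [InnerProductSpace ℝ F] (hβ : 0 < β) (hγ : 0 < γ)
    (hP : P.IsHermitian) (hLyap : Aᵀ * P + P * A = -((2 : ℝ) • 1))
    (he : HasDerivAt e (toEuclideanLin A (e t) + ⟪θ t - θstar, φ t⟫ • b) t)
    (hϑ : HasDerivAt ϑ ((-γ * ⟪e t, toEuclideanLin P b⟫) • φ t) t)
    (hθ : HasDerivAt θ ((-(β * N)) • (θ t - ϑ t)) t)
    (hN : N = 1 + (2 * γ * ‖toEuclideanLin P b‖ ^ 2 / β) * ‖φ t‖ ^ 2) :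
    ∃ V', HasDerivAt (tunerLyapunov P γ θstar e θ ϑ) V' t ∧ V' ≤ -‖e t‖ ^ 2 := by
  refine ⟨_, hasDerivAt_tunerLyapunov hP hLyap hγ.ne' he hϑ hθ, ?_⟩
  rw [hN]
  exact tunerLyapunov_rate_le hβ hγ (abs_real_inner_le_norm _ _) (abs_real_inner_le_norm _ _)

theorem tunerLyapunov_bounds {c : ℝ} (hc : 0 ≤ c)
    (hcP : ∀ x, c * ‖x‖ ^ 2 ≤ ⟪x, toEuclideanLin P x⟫) (hγ : 0 < γ) (t : ℝ) :
    c * ‖e t‖ ^ 2 ≤ tunerLyapunov P γ θstar e θ ϑ t ∧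
      ‖θ t - θstar‖ ^ 2 ≤ 2 * γ * tunerLyapunov P γ θstar e θ ϑ t := by
  have hPe := hcP (e t)
  have hPe0 : 0 ≤ ⟪e t, toEuclideanLin P (e t)⟫ := (by positivity : 0 ≤ c * ‖e t‖ ^ 2).trans hPe
  have htri : ‖θ t - θstar‖ ≤ ‖θ t - ϑ t‖ + ‖ϑ t - θstar‖ :=
    norm_sub_le_norm_sub_add_norm_sub _ _ _
  unfold tunerLyapunov
  constructor
  · have : 0 ≤ γ⁻¹ * (‖ϑ t - θstar‖ ^ 2 + ‖θ t - ϑ t‖ ^ 2) := by positivity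
    linarith
  · have hexp : 2 * γ * (⟪e t, toEuclideanLin P (e t)⟫
          + γ⁻¹ * (‖ϑ t - θstar‖ ^ 2 + ‖θ t - ϑ t‖ ^ 2))
        = 2 * γ * ⟪e t, toEuclideanLin P (e t)⟫
          + 2 * (‖ϑ t - θstar‖ ^ 2 + ‖θ t - ϑ t‖ ^ 2) := by
      field_simp
    rw [hexp]
    nlinarith [sq_nonneg (‖θ t - ϑ t‖ - ‖ϑ t - θstar‖), norm_nonneg (θ t - θstar)]

theorem norm_toEuclideanLin_add_inner_smul_le [InnerProductSpace ℝ F] (A : Matrix ι ι ℝ)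
    (x b : EuclideanSpace ℝ ι) (u v : F) :
    ‖toEuclideanLin A x + ⟪u, v⟫ • b‖ ≤ ‖toEuclideanCLM (𝕜 := ℝ) A‖ * ‖x‖ + ‖u‖ * ‖v‖ * ‖b‖ := by
  calc ‖toEuclideanLin A x + ⟪u, v⟫ • b‖ ≤ ‖toEuclideanLin A x‖ + |⟪u, v⟫| * ‖b‖ := by
        rw [← Real.norm_eq_abs, ← norm_smul]; exact norm_add_le _ _
    _ ≤ ‖toEuclideanCLM (𝕜 := ℝ) A‖ * ‖x‖ + ‖u‖ * ‖v‖ * ‖b‖ := by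
        gcongr
        · exact (toEuclideanCLM (𝕜 := ℝ) A).le_opNorm x
        · exact abs_real_inner_le_norm _ _

end HigherOrderTuner

theorem stmt_15_general {n d : ℕ} (β γ : ℝ) (hβ : 0 < β) (hγ : 0 < γ)
    (A P : Matrix (Fin n) (Fin n) ℝ) (hP : P.PosDef)
    (hLyap : Aᵀ * P + P * A = -((2 : ℝ) • (1 : Matrix (Fin n) (Fin n) ℝ)))
    (b : EuclideanSpace ℝ (Fin n))
    (φ : ℝ → EuclideanSpace ℝ (Fin d)) (hφ_bdd : ∃ M : ℝ, ∀ t : ℝ, ‖φ t‖ ≤ M)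
    (θstar : EuclideanSpace ℝ (Fin d))
    (e : ℝ → EuclideanSpace ℝ (Fin n)) (θ ϑ : ℝ → EuclideanSpace ℝ (Fin d))
    (Nt : ℝ → ℝ)
    (hNt : Nt = fun t => 1 + (2 * γ * ‖Matrix.toEuclideanLin P b‖ ^ 2 / β) * ‖φ t‖ ^ 2)
    (he : ∀ t : ℝ, HasDerivAt e
      (Matrix.toEuclideanLin A (e t) + ⟪θ t - θstar, φ t⟫ • b) t)
    (hϑ : ∀ t : ℝ, HasDerivAt ϑ ((-γ * ⟪e t, Matrix.toEuclideanLin P b⟫) • φ t) t)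
    (hθ : ∀ t : ℝ, HasDerivAt θ ((-(β * Nt t)) • (θ t - ϑ t)) t) :
    Tendsto e atTop (nhds (0 : EuclideanSpace ℝ (Fin n))) := by
  obtain ⟨M, hM⟩ := hφ_bdd
  obtain ⟨c, hc, hcP⟩ := (toEuclideanLin P).exists_pos_mul_norm_sq_le_inner_self
    fun _ => hP.inner_toEuclideanLin_pos
  choose V' hV' hV'_le using fun t => exists_hasDerivAt_tunerLyapunov_le hβ hγ hP.isHermitian
    hLyap (he t) (hϑ t) (hθ t) (congrFun hNt t)
  set V := tunerLyapunov P γ θstar e θ ϑ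
  have hV_bounds : ∀ t, c * ‖e t‖ ^ 2 ≤ V t ∧ ‖θ t - θstar‖ ^ 2 ≤ 2 * γ * V t :=
    tunerLyapunov_bounds hc.le hcP hγ
  have hV_anti : Antitone V :=
    antitone_of_hasDerivAt_nonpos hV' fun t => (hV'_le t).trans (neg_nonpos.2 (sq_nonneg _))
  have he_bdd : ∀ t, 0 ≤ t → ‖e t‖ ≤ √(V 0 / c) := fun t ht => by
    rw [← abs_norm]
    exact Real.abs_le_sqrt ((le_div_iff₀' hc).2 ((hV_bounds t).1.trans (hV_anti ht)))
  have hθ_bdd : ∀ t, 0 ≤ t → ‖θ t - θstar‖ ≤ √(2 * γ * V 0) := fun t ht => by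
    rw [← abs_norm]
    exact Real.abs_le_sqrt ((hV_bounds t).2.trans (by gcongr; exact hV_anti ht))
  have he'_bdd : ∀ t, 0 ≤ t → ‖toEuclideanLin A (e t) + ⟪θ t - θstar, φ t⟫ • b‖ ≤
      ‖toEuclideanCLM (𝕜 := ℝ) A‖ * √(V 0 / c) + √(2 * γ * V 0) * M * ‖b‖ := fun t ht =>
    (norm_toEuclideanLin_add_inner_smul_le _ _ _ _ _).trans <| by
      gcongr
      exacts [he_bdd t ht, hθ_bdd t ht, hM t]
  have he_cont : Continuous e := continuous_iff_continuousAt.2 fun t => (he t).continuousAt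
  have he_L2 : ∀ T, 0 ≤ T → ∫ t in (0 : ℝ)..T, ‖e t‖ ^ 2 ≤ V 0 := fun T hT =>
    (integral_le_sub_of_hasDerivAt_le_neg hT hV' (he_cont.norm.pow 2) hV'_le).trans <|
      sub_le_self _ ((by positivity : 0 ≤ c * ‖e T‖ ^ 2).trans (hV_bounds T).1)
  exact tendsto_zero_of_hasDerivAt_of_integral_norm_sq_le he he_bdd he'_bdd he_L2

/-- Higher order tuner for adaptive control: if `φ ∈ L^∞`, then `e(t) → 0`. -/
theorem stmt_15 {n d : ℕ} (β γ : ℝ) (hβ : 0 < β) (hγ : 0 < γ)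
    (A P : Matrix (Fin n) (Fin n) ℝ) (hP : P.PosDef)
    (hLyap : Aᵀ * P + P * A = -((2 : ℝ) • (1 : Matrix (Fin n) (Fin n) ℝ)))
    (b : EuclideanSpace ℝ (Fin n))
    (φ : ℝ → EuclideanSpace ℝ (Fin d)) (hφ : Continuous φ)
    (hφ_bdd : ∃ M : ℝ, ∀ t : ℝ, ‖φ t‖ ≤ M)
    (θstar : EuclideanSpace ℝ (Fin d))
    (e : ℝ → EuclideanSpace ℝ (Fin n)) (θ ϑ : ℝ → EuclideanSpace ℝ (Fin d))
    (Nt : ℝ → ℝ)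
    (hNt : Nt = fun t => 1 + (2 * γ * ‖Matrix.toEuclideanLin P b‖ ^ 2 / β) * ‖φ t‖ ^ 2)
    (he : ∀ t : ℝ, HasDerivAt e
      (Matrix.toEuclideanLin A (e t) + ⟪θ t - θstar, φ t⟫ • b) t)
    (hϑ : ∀ t : ℝ, HasDerivAt ϑ ((-γ * ⟪e t, Matrix.toEuclideanLin P b⟫) • φ t) t)
    (hθ : ∀ t : ℝ, HasDerivAt θ ((-(β * Nt t)) • (θ t - ϑ t)) t) :
    Tendsto e atTop (nhds (0 : EuclideanSpace ℝ (Fin n))) :=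
  stmt_15_general β γ hβ hγ A P hP hLyap b φ hφ_bdd θstar e θ ϑ Nt hNt he hϑ hθ
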